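/- arXiv:1611.05662 — 9 statements merged into one kernel-verified Lean document; each statement's English description precedes it below -/
import Mathlib

section
/- Let G be an abelian group and let γ : G → Aut(G) be a map such that for all g, h ∈ G, γ(g)·γ(h) = γ(γ(h)(g) + h). If moreover γ(β(g)) = β ∘ γ(g) ∘ β⁻¹ for all g ∈ G and β ∈ Aut(G), then γ is a group homomorphism from G to Aut(G). -/
/-!
Feeding `γ(h)⁻¹ g` into the cocycle identity and using equivariance for `β = γ(h)⁻¹` gives
`γ(g + h) = γ(h)⁻¹ γ(g) γ(h)²`. Negation is central in `Aut G`, so equivariance also gives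
`γ(-g) = γ(g)`; taking `h = -g` then shows `γ(g)² = 1`. Hence `γ(g + h) = γ(h) γ(g)`, and
commutativity of `G` turns this into `γ(g + h) = γ(g) γ(h)`.
-/

theorem AddAut.addCommute_neg {G : Type*} [AddCommGroup G] (β : AddAut G) :
    AddCommute (AddEquiv.neg G : AddAut G) β :=
  AddEquiv.ext fun x => (map_neg β x).symm

namespace GammaFunction

variable {G : Type*} [AddCommGroup G] {γ : G → AddAut G}

theorem map_zero (hcoc : ∀ g h : G, γ g + γ h = γ (γ h g + h)) : γ 0 = 0 := by
  have h := hcoc 0 0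
  simp only [_root_.map_zero, add_zero] at h
  exact add_eq_left.mp h

theorem map_neg (hequiv : ∀ (β : AddAut G) (g : G), γ (β g) = β + γ g + -β) (g : G) :
    γ (-g) = γ g := by
  simpa [(AddAut.addCommute_neg (γ g)).eq] using hequiv (AddEquiv.neg G) g

theorem map_add_eq_conj (hcoc : ∀ g h : G, γ g + γ h = γ (γ h g + h))
    (hequiv : ∀ (β : AddAut G) (g : G), γ (β g) = β + γ g + -β) (g h : G) :
    γ (g + h) = -γ h + γ g + γ h + γ h := by
  have := hcoc ((-γ h) g) h
  rwa [AddAut.apply_neg_self, hequiv, neg_neg, eq_comm] at this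

theorem add_self_eq_zero (hcoc : ∀ g h : G, γ g + γ h = γ (γ h g + h))
    (hequiv : ∀ (β : AddAut G) (g : G), γ (β g) = β + γ g + -β) (g : G) :
    γ g + γ g = 0 := by
  have h := map_add_eq_conj hcoc hequiv g (-g)
  rw [map_neg hequiv, add_neg_cancel, map_zero hcoc, neg_add_cancel, zero_add] at h
  exact h.symm

theorem map_add_eq_add_swap (hcoc : ∀ g h : G, γ g + γ h = γ (γ h g + h))
    (hequiv : ∀ (β : AddAut G) (g : G), γ (β g) = β + γ g + -β) (g h : G) :
    γ (g + h) = γ h + γ g := by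
  have hneg : -γ h = γ h := neg_eq_of_add_eq_zero_left (add_self_eq_zero hcoc hequiv h)
  rw [map_add_eq_conj hcoc hequiv, hneg, add_assoc, add_self_eq_zero hcoc hequiv, add_zero]

end GammaFunction

theorem stmt_0 {G : Type*} [AddCommGroup G] (γ : G → AddAut G)
    (hcoc : ∀ g h : G, γ g + γ h = γ (γ h g + h))
    (hequiv : ∀ (β : AddAut G) (g : G), γ (β g) = β + γ g + -β) :
    ∀ g h : G, γ (g + h) = γ g + γ h := fun g h => by
  rw [add_comm, GammaFunction.map_add_eq_add_swap hcoc hequiv]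
end

section
/- Let (G, +, ·) be a commutative ring such that every automorphism of (G, +) is a ring automorphism. If the additive group (G, +) has no elements of order 2, then the multiplication is trivial: g·h = 0 for all g, h ∈ G. -/
theorem stmt_2 {G : Type*} [NonUnitalCommRing G]
    (haut : ∀ (β : AddAut G) (g h : G), β (g * h) = β g * β h)
    (hno2 : ∀ x : G, 2 • x = 0 → x = 0) :
    ∀ g h : G, g * h = 0 := by
  intro g h
  have := haut (AddEquiv.neg G) g h
  simp only [AddEquiv.neg_apply, neg_mul_neg] at this
  apply hno2
  rw [two_smul]
  nth_rewrite 1 [← neg_neg (g * h)]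
  rw [this, neg_add_cancel]
end

section
/- Let G be an abelian group and γ : G → Aut(G) a group homomorphism satisfying γ(β(g)) = β⁻¹ ∘ γ(g) ∘ β for all g ∈ G and β ∈ Aut(G). Define g·h := -g + γ(h)(g). Then for all g, h ∈ G, γ(g·h) is the identity automorphism. -/
/- The image of `γ` is a quotient of the abelian group `G`, hence abelian, so equivariance
gives `γ (γ h g) = -γ h + γ g + γ h = γ g`; therefore `γ (-g + γ h g) = -γ g + γ g = 0`. -/

theorem stmt_5 {G : Type*} [AddCommGroup G] (γ : G → AddAut G)
    (hhom : ∀ g h : G, γ (g + h) = γ g + γ h)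
    (hequiv : ∀ (β : AddAut G) (g : G), γ (β g) = -β + γ g + β) :
    ∀ g h : G, γ (-g + γ h g) = 0 := by
  intro g h
  let φ : G →+ AddAut G := AddMonoidHom.mk' γ hhom
  have hcomm : γ g + γ h = γ h + γ g := ((AddCommute.all g h).map φ).eq
  have hneg : γ (-g) = -γ g := map_neg φ g
  have hconj : γ (γ h g) = γ g := by
    rw [hequiv, add_assoc, hcomm, neg_add_cancel_left]
  calc γ (-g + γ h g) = -γ g + γ g := by rw [hhom, hneg, hconj]
    _ = 0 := neg_add_cancel _
end

section
/- Let G be a group, ρ : G → S(G) the right regular representation into the symmetric group on the underlying set of G, N a subgroup of S(G), and θ ∈ S(G) a bijection such that θ(x·y) = θ(x) * θ(y) where * is a group operation on G whose right translations form N. If additionally θ² is the identity and N normalizes-wise satisfies N_{S(G)}(N) ≥ N_{S(G)}(ρ(G)) with θ conjugating ρ(G) to N, then N_{S(G)}(N) = N_{S(G)}(ρ(G)). -/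
/-!
Conjugation by `θ` carries `R` onto `N`, hence carries the normalizer of `N` into the normalizer
of `R`. Composing with the assumed inclusion `N_S(R) ≤ N_S(N)` and conjugating once more lands
`θ² g θ⁻²` in `N_S(R)` for every `g ∈ N_S(N)`, and `θ² = 1`.
-/

open Subgroup

theorem conj_mem_normalizer_of_forall_mem_iff {H : Type*} [Group H] {A B : Set H} {θ g : H}
    (hAB : ∀ σ, σ ∈ A ↔ θ⁻¹ * σ * θ ∈ B) (hg : g ∈ normalizer B) :
    θ * g * θ⁻¹ ∈ normalizer A := by
  rw [mem_set_normalizer_iff] at hg ⊢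
  intro σ
  rw [hAB, hAB, hg]
  group

theorem stmt_10_general {G : Type*} [Group G]
    (θ : Equiv.Perm G)
    (N R : Subgroup (Equiv.Perm G))
    (hθ2 : θ * θ = 1)
    (hconj : ∀ σ : Equiv.Perm G, σ ∈ R ↔ θ⁻¹ * σ * θ ∈ N)
    (hge : Subgroup.normalizer (R : Set (Equiv.Perm G)) ≤ Subgroup.normalizer (N : Set (Equiv.Perm G))) :
    Subgroup.normalizer (N : Set (Equiv.Perm G)) = Subgroup.normalizer (R : Set (Equiv.Perm G)) := by
  refine le_antisymm (fun g hg => ?_) hge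
  have hθθg := conj_mem_normalizer_of_forall_mem_iff hconj
    (hge (conj_mem_normalizer_of_forall_mem_iff hconj hg))
  have hθinv : θ⁻¹ = θ := inv_eq_of_mul_eq_one_right hθ2
  rwa [hθinv, ← mul_assoc, ← mul_assoc, hθ2, one_mul, mul_assoc, hθ2, mul_one] at hθθg

theorem stmt_10 {G : Type*} [Group G]
    (star : G → G → G) (θ : Equiv.Perm G)
    (hθstar : ∀ x y : G, θ (x * y) = star (θ x) (θ y))
    (N R : Subgroup (Equiv.Perm G))
    (hR : ∀ σ : Equiv.Perm G, σ ∈ R ↔ ∃ h : G, σ = Equiv.mulRight h)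
    (hN : ∀ σ : Equiv.Perm G, σ ∈ N ↔ ∃ h : G, ∀ x : G, σ x = star x h)
    (hθ2 : θ * θ = 1)
    (hconj : ∀ σ : Equiv.Perm G, σ ∈ R ↔ θ⁻¹ * σ * θ ∈ N)
    (hge : Subgroup.normalizer (R : Set (Equiv.Perm G)) ≤ Subgroup.normalizer (N : Set (Equiv.Perm G))) :
    Subgroup.normalizer (N : Set (Equiv.Perm G)) = Subgroup.normalizer (R : Set (Equiv.Perm G)) :=
  stmt_10_general θ N R hθ2 hconj hge
end

section
/- Let P be a nontrivial finite abelian p-group. Then P has a characteristic subgroup of order p if and only if P is the direct product of a cyclic group of order p^e (for some e ≥ 1) and a group of exponent strictly less than p^e. Moreover, in that case the unique characteristic subgroup of order p is P^{p^{e-1}} (the image of the p^{e-1}-power map), where p^e is the exponent of P. -/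
/-!
Write `P ≅ A × Q` with `A = ℤ/p^e` cyclic of maximal order `p ^ e = exp P`, and let `H = ⟨h⟩` be
characteristic of order `p`. For a homomorphism `f : A → Q` the shear `(a, b) ↦ (a, b * f a)`
moves `h` by `(1, f h.1) ∈ H`; if this is nontrivial it generates `H`, forcing `h.1 = 1`. So every
such `f`, and symmetrically every `f : Q → A`, kills the corresponding coordinate of `h`.
Homomorphisms `Q → ℤ/p^e` separate points, so `h ∈ A`; were `exp Q = p ^ e`, an embedding `A → Q`
would give `h = 1`. Hence `exp Q < p ^ e`, and `h` lies in the `p`-torsion of `A`, which is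
`A ^ (p ^ (e - 1)) = P ^ (p ^ (e - 1))`, a characteristic subgroup of order `p`.
-/

open Subgroup

theorem Nat.dvd_prime_pow_pred_of_lt {p N e d : ℕ} (hp : p.Prime) (hd : d ∣ p ^ N)
    (hlt : d < p ^ e) : d ∣ p ^ (e - 1) := by
  obtain ⟨k, -, rfl⟩ := (Nat.dvd_prime_pow hp).mp hd
  exact pow_dvd_pow p (by have := (Nat.pow_lt_pow_iff_right hp.one_lt).mp hlt; omega)

theorem Monoid.exponent_dvd_of_mulEquiv_prod {G A B : Type*} [Monoid G] [Monoid A] [Monoid B]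
    (ψ : G ≃* A × B) : exponent B ∣ exponent G := by
  rw [exponent_eq_of_mulEquiv ψ, exponent_prod]
  exact dvd_lcm_right _ _

instance hasEnoughRootsOfUnity_multiplicative_zmod (n : ℕ) [NeZero n] :
    HasEnoughRootsOfUnity (Multiplicative (ZMod n)) n where
  prim := ⟨.ofAdd 1, by
    rw [IsPrimitiveRoot.iff_orderOf, orderOf_ofAdd_eq_addOrderOf, ZMod.addOrderOf_one]⟩
  cyc :=
    have : IsCyclic (Multiplicative (ZMod n))ˣ := isCyclic_of_surjective toUnits toUnits.surjective
    inferInstance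

theorem exists_monoidHom_zmod_apply_ne_one {Q : Type*} [CommGroup Q] [Finite Q] {n : ℕ}
    [NeZero n] (hQ : Monoid.exponent Q ∣ n) {b : Q} (hb : b ≠ 1) :
    ∃ f : Q →* Multiplicative (ZMod n), f b ≠ 1 := by
  have := HasEnoughRootsOfUnity.of_dvd (Multiplicative (ZMod n)) hQ
  obtain ⟨φ, hφ⟩ :=
    CommGroup.exists_apply_ne_one_of_hasEnoughRootsOfUnity Q (Multiplicative (ZMod n)) hb
  exact ⟨toUnits.symm.toMonoidHom.comp φ, by simpa using hφ⟩

theorem exists_injective_monoidHom_zmod_of_exponent_eq {Q : Type*} [CommGroup Q] [Finite Q]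
    {n : ℕ} (hQ : Monoid.exponent Q = n) :
    ∃ g : Multiplicative (ZMod n) →* Q, Function.Injective g := by
  obtain ⟨q, hq⟩ := Monoid.exists_orderOf_eq_exponent (G := Q) Monoid.ExponentExists.of_finite
  have hcard : Nat.card (Multiplicative (ZMod n)) = Nat.card (zpowers q) := by
    rw [Nat.card_zpowers, hq, hQ, Nat.card_congr Multiplicative.toAdd, Nat.card_zmod]
  exact ⟨(zpowers q).subtype.comp (mulEquivOfCyclicCardEq hcard).toMonoidHom,
    (zpowers q).subtype_injective.comp (mulEquivOfCyclicCardEq hcard).injective⟩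

theorem exists_mulEquiv_zmod_prod_of_exponent_eq {G : Type*} [CommGroup G] [Finite G] {p e : ℕ}
    (hp : p.Prime) (he : 1 ≤ e) (hG : Monoid.exponent G = p ^ e) :
    ∃ (Q : Type) (_ : CommGroup Q) (_ : Fintype Q),
      Nonempty (G ≃* Multiplicative (ZMod (p ^ e)) × Q) := by
  classical
  obtain ⟨ι, _, n, hn, ⟨ψ⟩⟩ := CommGroup.equiv_prod_multiplicative_zmod_of_finite G
  have (i : ι) : NeZero (n i) := ⟨(Nat.zero_lt_one.trans (hn i)).ne'⟩
  have hlcm : Finset.univ.lcm n = p ^ e := by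
    rw [← hG, Monoid.exponent_eq_of_mulEquiv ψ, Monoid.exponent_pi]
    simp [IsCyclic.exponent_eq_card]
  obtain ⟨i₀, hi₀⟩ : ∃ i₀, n i₀ = p ^ e := by
    by_contra! hne
    have hdvd (i : ι) : n i ∣ p ^ e := hlcm ▸ Finset.dvd_lcm (Finset.mem_univ i)
    have : p ^ e ∣ p ^ (e - 1) := hlcm ▸ Finset.lcm_dvd fun i _ =>
      Nat.dvd_prime_pow_pred_of_lt hp (hdvd i)
        ((Nat.le_of_dvd (pow_pos hp.pos e) (hdvd i)).lt_of_ne (hne i))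
    have := (Nat.pow_dvd_pow_iff_le_right hp.one_lt).mp this
    omega
  let E : ((i : ι) → Multiplicative (ZMod (n i))) ≃*
      Multiplicative (ZMod (n i₀)) × ((j : {j // j ≠ i₀}) → Multiplicative (ZMod (n j))) :=
    { Equiv.piSplitAt i₀ _ with map_mul' := fun _ _ => rfl }
  exact ⟨_, inferInstance, inferInstance, ⟨hi₀ ▸ ψ.trans E⟩⟩

theorem IsCyclic.ker_powMonoidHom_eq_range {G : Type*} [CommGroup G] [IsCyclic G] [Finite G]
    {m k : ℕ} (h : Nat.card G = m * k) :
    (powMonoidHom m : G →* G).ker = (powMonoidHom k : G →* G).range := by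
  have hk : 0 < k := Nat.pos_of_mul_pos_left (h ▸ Nat.card_pos)
  refine (eq_of_le_of_card_ge ?_ ?_).symm
  · rintro _ ⟨x, rfl⟩
    rw [MonoidHom.mem_ker, powMonoidHom_apply, powMonoidHom_apply, ← pow_mul, mul_comm, ← h,
      pow_card_eq_one']
  · rw [IsCyclic.card_powMonoidHom_ker, IsCyclic.card_powMonoidHom_range, h,
      Nat.gcd_mul_right_left, Nat.gcd_mul_left_left, Nat.mul_div_cancel _ hk]

theorem range_powMonoidHom_prod {A B : Type*} [CommGroup A] [CommGroup B] {n : ℕ}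
    (hB : Monoid.exponent B ∣ n) :
    (powMonoidHom n : A × B →* A × B).range = (powMonoidHom n : A →* A).range.prod ⊥ := by
  have hB' : (powMonoidHom n : B →* B).range = ⊥ := by
    rw [MonoidHom.range_eq_bot_iff]
    ext b
    exact Monoid.exponent_dvd_iff_forall_pow_eq_one.mp hB b
  rw [← hB', ← MonoidHom.range_prodMap]
  rfl

theorem card_multiplicative_zmod_prime_pow {p e : ℕ} (he : 1 ≤ e) :
    Nat.card (Multiplicative (ZMod (p ^ e))) = p * p ^ (e - 1) := by
  rw [Nat.card_congr Multiplicative.toAdd, Nat.card_zmod, ← pow_succ', Nat.sub_add_cancel he]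

theorem card_range_powMonoidHom_zmod_prod {p e : ℕ} (hp : p.Prime) (he : 1 ≤ e) {Q : Type*}
    [CommGroup Q] (hQ : Monoid.exponent Q ∣ p ^ (e - 1)) :
    Nat.card (powMonoidHom (p ^ (e - 1)) :
      Multiplicative (ZMod (p ^ e)) × Q →* Multiplicative (ZMod (p ^ e)) × Q).range = p := by
  have : NeZero (p ^ e) := ⟨pow_ne_zero _ hp.ne_zero⟩
  rw [range_powMonoidHom_prod hQ, Nat.card_congr (prodEquiv _ _).toEquiv, Nat.card_prod, card_bot,
    mul_one, ← IsCyclic.ker_powMonoidHom_eq_range (card_multiplicative_zmod_prime_pow he),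
    IsCyclic.card_powMonoidHom_ker, card_multiplicative_zmod_prime_pow he,
    Nat.gcd_mul_right_left]

theorem Subgroup.eq_zpowers_of_card_eq_prime {G : Type*} [Group G] {H : Subgroup G} {p : ℕ}
    (hp : p.Prime) (hH : Nat.card H = p) {g : G} (hg : g ∈ H) (hg1 : g ≠ 1) : H = zpowers g := by
  have : Finite H := Nat.finite_of_card_ne_zero (hH ▸ hp.ne_zero)
  refine (eq_of_le_of_card_ge (zpowers_le.mpr hg) ?_).symm
  have hdvd : orderOf g ∣ p := hH ▸ H.orderOf_dvd_natCard hg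
  rw [Nat.card_zpowers, hH, ((Nat.dvd_prime hp).mp hdvd).resolve_left (by simpa using hg1)]

theorem characteristic_range_powMonoidHom {G : Type*} [CommGroup G] (n : ℕ) :
    (powMonoidHom n : G →* G).range.Characteristic :=
  characteristic_iff_map_eq.mpr fun φ => φ.map_range_powMonoidHom n

theorem Subgroup.Characteristic.map_mulEquiv {G H : Type*} [Group G] [Group H] {K : Subgroup G}
    (hK : K.Characteristic) (ψ : G ≃* H) : (K.map (ψ : G →* H)).Characteristic := by
  rw [characteristic_iff_map_eq] at hK ⊢
  intro φ
  rw [map_map]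
  conv_rhs => rw [← hK ((ψ.trans φ).trans ψ.symm), map_map]
  congr 1
  ext
  simp

def MulEquiv.prodShear {A B : Type*} [Group A] [CommGroup B] (f : A →* B) : A × B ≃* A × B where
  toFun x := (x.1, x.2 * f x.1)
  invFun x := (x.1, x.2 * (f x.1)⁻¹)
  left_inv x := by simp
  right_inv x := by simp
  map_mul' x y := by
    simp only [Prod.fst_mul, Prod.snd_mul, map_mul, Prod.mk_mul_mk, mul_mul_mul_comm]

namespace Subgroup.Characteristic

variable {p : ℕ}

theorem apply_fst_eq_one {A B : Type*} [Group A] [CommGroup B] {H : Subgroup (A × B)}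
    (hH : H.Characteristic) (hp : p.Prime) (hcard : Nat.card H = p) (f : A →* B) {h : A × B}
    (hh : h ∈ H) : f h.1 = 1 := by
  by_contra hf
  let σ := MulEquiv.prodShear f
  have hσh : σ h * h⁻¹ = (1, f h.1) := by
    ext <;> simp [σ, MulEquiv.prodShear]
  have hmem : (1, f h.1) ∈ H := hσh ▸ mul_mem (by rwa [← hH.fixed σ] at hh) (inv_mem hh)
  obtain ⟨k, hk⟩ :=
    mem_zpowers_iff.mp (eq_zpowers_of_card_eq_prime hp hcard hmem (by simpa using hf) ▸ hh)
  have h1 : h.1 = 1 := by rw [← hk]; simp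
  exact hf (by rw [h1, map_one])

theorem apply_snd_eq_one {A B : Type*} [CommGroup A] [Group B] {H : Subgroup (A × B)}
    (hH : H.Characteristic) (hp : p.Prime) (hcard : Nat.card H = p) (f : B →* A) {h : A × B}
    (hh : h ∈ H) : f h.2 = 1 :=
  (hH.map_mulEquiv MulEquiv.prodComm).apply_fst_eq_one hp
    (by rw [card_map_of_injective MulEquiv.prodComm.injective, hcard]) f (mem_map_of_mem _ hh)

variable {Q : Type*} [CommGroup Q] [Finite Q]

theorem snd_eq_one {n : ℕ} [NeZero n] {H : Subgroup (Multiplicative (ZMod n) × Q)}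
    (hH : H.Characteristic) (hp : p.Prime) (hcard : Nat.card H = p)
    (hQ : Monoid.exponent Q ∣ n) {h : Multiplicative (ZMod n) × Q} (hh : h ∈ H) : h.2 = 1 := by
  by_contra hne
  obtain ⟨f, hf⟩ := exists_monoidHom_zmod_apply_ne_one hQ hne
  exact hf (hH.apply_snd_eq_one hp hcard f hh)

variable {e : ℕ} {H : Subgroup (Multiplicative (ZMod (p ^ e)) × Q)}

theorem exponent_dvd_prime_pow_pred (hH : H.Characteristic) (hp : p.Prime)
    (hcard : Nat.card H = p) (hQ : Monoid.exponent Q ∣ p ^ e) :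
    Monoid.exponent Q ∣ p ^ (e - 1) := by
  have : NeZero (p ^ e) := ⟨pow_ne_zero _ hp.ne_zero⟩
  by_contra hndvd
  have hQe : Monoid.exponent Q = p ^ e :=
    (Nat.le_of_dvd (pow_pos hp.pos e) hQ).lt_or_eq.resolve_left
      fun hlt => hndvd (Nat.dvd_prime_pow_pred_of_lt hp hQ hlt)
  obtain ⟨g, hg⟩ := exists_injective_monoidHom_zmod_of_exponent_eq hQe
  have hbot : H = ⊥ := (eq_bot_iff_forall H).mpr fun h hh =>
    Prod.ext (hg ((hH.apply_fst_eq_one hp hcard g hh).trans (map_one g).symm))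
      (hH.snd_eq_one hp hcard hQ hh)
  rw [hbot, card_bot] at hcard
  exact hp.one_lt.ne hcard

theorem eq_range_powMonoidHom (hH : H.Characteristic) (hp : p.Prime) (he : 1 ≤ e)
    (hcard : Nat.card H = p) (hQ : Monoid.exponent Q ∣ p ^ e) :
    H = (powMonoidHom (p ^ (e - 1))).range := by
  have : NeZero (p ^ e) := ⟨pow_ne_zero _ hp.ne_zero⟩
  have hQ' := hH.exponent_dvd_prime_pow_pred hp hcard hQ
  refine eq_of_le_of_card_ge (fun h hh => ?_)
    (by rw [card_range_powMonoidHom_zmod_prod hp he hQ', hcard])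
  have hpow : h ^ p = 1 :=
    orderOf_dvd_iff_pow_eq_one.mp ((H.orderOf_dvd_natCard hh).trans hcard.dvd)
  rw [range_powMonoidHom_prod hQ', mem_prod,
    ← IsCyclic.ker_powMonoidHom_eq_range (card_multiplicative_zmod_prime_pow he)]
  exact ⟨by simpa using congrArg Prod.fst hpow, hH.snd_eq_one hp hcard hQ hh⟩

end Subgroup.Characteristic

theorem stmt_12 {P : Type*} [CommGroup P] [Fintype P] [Nontrivial P]
    (p : ℕ) [Fact p.Prime] (hP : IsPGroup p P) :
    ((∃ H : Subgroup P, H.Characteristic ∧ Nat.card H = p) ↔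
      (∃ (e : ℕ), 1 ≤ e ∧ ∃ (Q : Type) (_ : CommGroup Q) (_ : Fintype Q),
        Nonempty (P ≃* (Multiplicative (ZMod (p ^ e)) × Q)) ∧
          Monoid.exponent Q < p ^ e)) ∧
    (∀ H K : Subgroup P, H.Characteristic → Nat.card H = p →
        K.Characteristic → Nat.card K = p → H = K) ∧
    (∀ H : Subgroup P, H.Characteristic → Nat.card H = p →
      ∀ e : ℕ, Monoid.exponent P = p ^ e →
        H = (powMonoidHom (p ^ (e - 1)) : P →* P).range) := by
  have hp : p.Prime := Fact.out
  obtain ⟨e, hexp⟩ := hP.exists_exponent_eq_pow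
  have he : 1 ≤ e := Nat.one_le_iff_ne_zero.mpr fun h0 =>
    (Monoid.one_lt_exponent (G := P)).ne' (by rw [hexp, h0, pow_zero])
  obtain ⟨Q, _, _, ⟨ψ⟩⟩ := exists_mulEquiv_zmod_prod_of_exponent_eq hp he hexp
  have hQ : Monoid.exponent Q ∣ p ^ e := hexp ▸ Monoid.exponent_dvd_of_mulEquiv_prod ψ
  have key : ∀ H : Subgroup P, H.Characteristic → Nat.card H = p →
      Monoid.exponent Q ∣ p ^ (e - 1) ∧ H = (powMonoidHom (p ^ (e - 1)) : P →* P).range := by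
    intro H hH hcard
    have hH' := hH.map_mulEquiv ψ
    have hcard' : Nat.card (H.map (ψ : P →* Multiplicative (ZMod (p ^ e)) × Q)) = p := by
      rw [card_map_of_injective ψ.injective, hcard]
    refine ⟨hH'.exponent_dvd_prime_pow_pred hp hcard' hQ, map_injective (f := (ψ : P →* Multiplicative (ZMod (p ^ e)) × Q)) ψ.injective ?_⟩
    rw [hH'.eq_range_powMonoidHom hp he hcard' hQ, ← ψ.map_range_powMonoidHom]
  refine ⟨⟨fun ⟨H, hH, hcard⟩ => ?_, fun ⟨e', he', Q', _, _, ⟨ψ'⟩, hlt⟩ => ?_⟩, ?_, ?_⟩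
  · refine ⟨e, he, Q, inferInstance, inferInstance, ⟨ψ⟩, ?_⟩
    exact (Nat.le_of_dvd (pow_pos hp.pos _) (key H hH hcard).1).trans_lt
      (Nat.pow_lt_pow_right hp.one_lt (by omega))
  · have hQ' : Monoid.exponent Q' ∣ p ^ (e' - 1) :=
      Nat.dvd_prime_pow_pred_of_lt hp (hexp ▸ Monoid.exponent_dvd_of_mulEquiv_prod ψ') hlt
    refine ⟨_, characteristic_range_powMonoidHom (p ^ (e' - 1)), ?_⟩
    rw [← card_map_of_injective (f := (ψ' : P →* Multiplicative (ZMod (p ^ e')) × Q')) ψ'.injective, ψ'.map_range_powMonoidHom,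
      card_range_powMonoidHom_zmod_prod hp he' hQ']
  · intro H K hH hcardH hK hcardK
    rw [(key H hH hcardH).2, (key K hK hcardK).2]
  · intro H hH hcard e' he'
    obtain rfl : e' = e := Nat.pow_right_injective hp.two_le (he'.symm.trans hexp)
    exact (key H hH hcard).2
end

section
/- Let H be a finite abelian 2-group written as a direct product of cyclic groups ⟨x₁⟩ × ⋯ × ⟨x_m⟩ with |x₁| ≥ ⋯ ≥ |x_m|, with m ≥ 2, and let (H, +, ·) be a commutative ring structure on H such that every automorphism of (H, +) is a ring automorphism. Writing tᵢ for the unique involution in ⟨xᵢ⟩, the product x₁·x₂ lies in the subgroup ⟨t₁, t₂⟩ and x₁·x₂ ≠ t₂. -/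
lemma aux_pow_ne (e : ℕ) (he : 1 ≤ e) : ((2^(e-1) : ℕ) : ZMod (2^e)) ≠ 0 := by
  rw [Ne, ZMod.natCast_eq_zero_iff]
  intro h
  have h1 : 2^e ≤ 2^(e-1) := Nat.le_of_dvd (by positivity) h
  have h2 : (2:ℕ)^(e-1) < 2^e := Nat.pow_lt_pow_right one_lt_two (by omega)
  omega

lemma aux_tor (e : ℕ) (he : 1 ≤ e) (x : ZMod (2^e)) (hx : x + x = 0) :
    x = 0 ∨ x = ((2^(e-1) : ℕ) : ZMod (2^e)) := by
  haveI : NeZero ((2:ℕ)^e) := ⟨by positivity⟩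
  have hv : ((x.val + x.val : ℕ) : ZMod (2^e)) = 0 := by
    push_cast
    rw [ZMod.natCast_zmod_val]
    exact hx
  rw [ZMod.natCast_eq_zero_iff] at hv
  have hlt : x.val < 2^e := ZMod.val_lt x
  have h2 : 2^e = 2 * 2^(e-1) := by
    rw [← pow_succ']
    congr 1
    omega
  have hdvd : 2^(e-1) ∣ x.val := by
    rcases hv with ⟨c, hc⟩
    have hc' : x.val + x.val = 2 * (2^(e-1) * c) := by rw [hc, h2]; ring
    exact ⟨c, by omega⟩
  rcases hdvd with ⟨c, hc⟩
  have hc2 : c < 2 := by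
    by_contra h
    push_neg at h
    have : 2 * 2^(e-1) ≤ 2^(e-1) * c := by
      calc 2 * 2^(e-1) = 2^(e-1) * 2 := by ring
      _ ≤ 2^(e-1) * c := Nat.mul_le_mul_left _ h
    omega
  interval_cases c
  · left
    rw [← ZMod.natCast_zmod_val x, hc]
    simp
  · right
    rw [← ZMod.natCast_zmod_val x, hc]
    simp

/-- additive hom `ZMod (2^a) →+ ZMod (2^b)` for `a ≤ b`, sending `1` to `2^(b-a)`. -/
noncomputable def liftHom (a b : ℕ) (hab : a ≤ b) : ZMod (2^a) →+ ZMod (2^b) :=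
  ZMod.lift (2^a) ⟨zmultiplesHom _ (((2:ℕ)^(b-a) : ℕ) : ZMod (2^b)), by
    simp only [zmultiplesHom_apply, zsmul_eq_mul]
    push_cast
    rw [← pow_add, show a + (b - a) = b by omega,
      show (2 : ZMod (2^b)) = ((2:ℕ) : ZMod (2^b)) by push_cast; ring,
      ← Nat.cast_pow, ZMod.natCast_self]⟩

lemma liftHom_natCast (a b : ℕ) (hab : a ≤ b) (n : ℕ) :
    liftHom a b hab ((n : ℕ) : ZMod (2^a)) = ((n * 2^(b-a) : ℕ) : ZMod (2^b)) := by
  have h : ((n : ℕ) : ZMod (2^a)) = ((n : ℤ) : ZMod (2^a)) := by push_cast; ring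
  rw [h, liftHom, ZMod.lift_coe]
  simp only [zmultiplesHom_apply, zsmul_eq_mul]
  push_cast
  ring

/-- The shear automorphism `a ↦ a + Pi.single j (f (a i))` for `i ≠ j`. -/
def shear {m : ℕ} {e : Fin m → ℕ} (i j : Fin m) (hij : j ≠ i)
    (f : ZMod (2^(e i)) →+ ZMod (2^(e j))) : AddAut (∀ k, ZMod (2^(e k))) where
  toFun a := a + Pi.single j (f (a i))
  invFun a := a - Pi.single j (f (a i))
  left_inv a := by
    simp only [Pi.add_apply, Pi.single_eq_of_ne (Ne.symm hij), add_zero]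
    abel
  right_inv a := by
    simp only [Pi.sub_apply, Pi.single_eq_of_ne (Ne.symm hij), sub_zero]
    abel
  map_add' a b := by
    simp only [Pi.add_apply, map_add, Pi.single_add]
    abel

lemma shear_apply {m : ℕ} {e : Fin m → ℕ} (i j : Fin m) (hij : j ≠ i)
    (f : ZMod (2^(e i)) →+ ZMod (2^(e j))) (a : ∀ k, ZMod (2^(e k))) :
    shear i j hij f a = a + Pi.single j (f (a i)) := rfl

/-- negation as an additive automorphism. -/
def negAut {m : ℕ} {e : Fin m → ℕ} : AddAut (∀ k, ZMod (2^(e k))) where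
  toFun a := -a
  invFun a := -a
  left_inv a := by simp
  right_inv a := by simp
  map_add' a b := by abel

lemma negAut_apply {m : ℕ} {e : Fin m → ℕ} (a : ∀ k, ZMod (2^(e k))) :
    (negAut : AddAut (∀ k, ZMod (2^(e k)))) a = -a := rfl

theorem stmt_13 (m : ℕ) (hm : 2 ≤ m) (e : Fin m → ℕ)
    (he : ∀ i, 1 ≤ e i) (hmono : ∀ i j : Fin m, i ≤ j → e j ≤ e i)
    (mul : (∀ i, ZMod (2 ^ e i)) → (∀ i, ZMod (2 ^ e i)) → (∀ i, ZMod (2 ^ e i)))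
    (hcomm : ∀ a b, mul a b = mul b a)
    (hassoc : ∀ a b c, mul (mul a b) c = mul a (mul b c))
    (hdistl : ∀ a b c, mul (a + b) c = mul a c + mul b c)
    (hdistr : ∀ a b c, mul a (b + c) = mul a b + mul a c)
    (haut : ∀ (β : AddAut (∀ i, ZMod (2 ^ e i))) (a b),
      β (mul a b) = mul (β a) (β b)) :
    mul (Pi.single (⟨0, by omega⟩ : Fin m) 1) (Pi.single (⟨1, by omega⟩ : Fin m) 1) ∈
      AddSubgroup.closure
        {Pi.single (⟨0, by omega⟩ : Fin m) (2 ^ (e ⟨0, by omega⟩ - 1)),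
         Pi.single (⟨1, by omega⟩ : Fin m) (2 ^ (e ⟨1, by omega⟩ - 1))} ∧
    mul (Pi.single (⟨0, by omega⟩ : Fin m) 1) (Pi.single (⟨1, by omega⟩ : Fin m) 1) ≠
      Pi.single (⟨1, by omega⟩ : Fin m) (2 ^ (e ⟨1, by omega⟩ - 1)) := by
  set i0 : Fin m := ⟨0, by omega⟩ with hi0
  set i1 : Fin m := ⟨1, by omega⟩ with hi1
  have h01 : i0 ≠ i1 := by simp [hi0, hi1, Fin.ext_iff]
  set x1 : ∀ k, ZMod (2^(e k)) := Pi.single i0 1 with hx1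
  set x2 : ∀ k, ZMod (2^(e k)) := Pi.single i1 1 with hx2
  set p : ∀ k, ZMod (2^(e k)) := mul x1 x2 with hp
  -- basic ring facts
  have hmul0r : ∀ a, mul a 0 = 0 := by
    intro a
    have h := hdistr a 0 0
    rw [add_zero] at h
    exact (left_eq_add.mp h)
  have hmul0l : ∀ b, mul 0 b = 0 := by
    intro b
    rw [hcomm]; exact hmul0r b
  -- 2-torsion of all products
  have htwo : ∀ a b, mul a b + mul a b = 0 := by
    intro a b
    have h := haut negAut a b
    rw [negAut_apply, negAut_apply, negAut_apply] at h
    -- h : -(mul a b) = mul (-a) (-b)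
    have hna : ∀ u v, mul (-u) v = -(mul u v) := by
      intro u v
      have h2 := hdistl u (-u) v
      rw [add_neg_cancel, hmul0l] at h2
      exact (neg_eq_of_add_eq_zero_right h2.symm).symm
    have hnb : ∀ u v, mul u (-v) = -(mul u v) := by
      intro u v
      rw [hcomm, hna, hcomm]
    rw [hna, hnb, neg_neg] at h
    -- h : -(mul a b) = mul a b
    nth_rewrite 1 [← h]
    exact neg_add_cancel _
  have hp2 : p + p = 0 := htwo x1 x2
  -- other coordinates vanish
  have hi0le : ∀ k : Fin m, i0 ≤ k := fun k => by simp [hi0, Fin.le_def]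
  have hpk : ∀ k, k ≠ i0 → k ≠ i1 → p k = 0 := by
    intro k hk0 hk1
    have hek : e k ≤ e i0 := hmono i0 k (hi0le k)
    set f := liftHom (e k) (e i0) hek with hf
    set β := shear k i0 (Ne.symm hk0) f with hβ
    have hb1 : β x1 = x1 := by
      rw [hβ, shear_apply, hx1, Pi.single_eq_of_ne hk0, map_zero, Pi.single_zero, add_zero]
    have hb2 : β x2 = x2 := by
      rw [hβ, shear_apply, hx2, Pi.single_eq_of_ne hk1, map_zero, Pi.single_zero, add_zero]
    have hbp := haut β x1 x2
    rw [hb1, hb2, ← hp, hβ, shear_apply] at hbp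
    -- hbp : p + Pi.single i0 (f (p k)) = p
    have h0 : Pi.single i0 (f (p k)) = (0 : ∀ j, ZMod (2^(e j))) := add_eq_left.mp hbp
    have h1 : f (p k) = 0 := by
      have := congrFun h0 i0
      simpa [Pi.single_eq_same] using this
    have htk : p k + p k = 0 := by
      have := congrFun hp2 k
      simpa using this
    rcases aux_tor (e k) (he k) (p k) htk with h | h
    · exact h
    · exfalso
      rw [h, liftHom_natCast] at h1
      rw [show (2:ℕ)^(e k - 1) * 2^(e i0 - e k) = 2^(e i0 - 1) by
        rw [← pow_add]; congr 1; have := he k; omega] at h1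
      exact aux_pow_ne (e i0) (he i0) h1
  -- torsion values of the two relevant coordinates
  have hpi0 : p i0 = 0 ∨ p i0 = ((2^(e i0 - 1) : ℕ) : ZMod (2^(e i0))) :=
    aux_tor _ (he i0) _ (by simpa using congrFun hp2 i0)
  have hpi1 : p i1 = 0 ∨ p i1 = ((2^(e i1 - 1) : ℕ) : ZMod (2^(e i1))) :=
    aux_tor _ (he i1) _ (by simpa using congrFun hp2 i1)
  have hdecomp : p = Pi.single i0 (p i0) + Pi.single i1 (p i1) := by
    funext k
    by_cases hk0 : k = i0
    · subst hk0
      simp [Pi.single_eq_same, Pi.single_eq_of_ne h01]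
    · by_cases hk1 : k = i1
      · subst hk1
        simp [Pi.single_eq_same, Pi.single_eq_of_ne (Ne.symm h01)]
      · simp [hpk k hk0 hk1, Pi.single_eq_of_ne hk0, Pi.single_eq_of_ne hk1]
  have hcast0 : ((2:ZMod (2^(e i0))))^(e i0 - 1) = ((2^(e i0 - 1) : ℕ) : ZMod (2^(e i0))) := by
    push_cast; ring
  have hcast1 : ((2:ZMod (2^(e i1))))^(e i1 - 1) = ((2^(e i1 - 1) : ℕ) : ZMod (2^(e i1))) := by
    push_cast; ring
  constructor
  · -- membership
    rw [hdecomp]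
    refine add_mem ?_ ?_
    · rcases hpi0 with h | h
      · rw [h, Pi.single_zero]; exact zero_mem _
      · rw [h, ← hcast0]
        exact AddSubgroup.subset_closure (Set.mem_insert _ _)
    · rcases hpi1 with h | h
      · rw [h, Pi.single_zero]; exact zero_mem _
      · rw [h, ← hcast1]
        exact AddSubgroup.subset_closure (Set.mem_insert_of_mem _ rfl)
  · -- p ≠ t₂
    intro hpt
    have h10e : e i1 ≤ e i0 := hmono i0 i1 (hi0le i1)
    -- the shear γ adding coordinate 0 into coordinate 1
    set g := (ZMod.castHom (pow_dvd_pow 2 h10e) (ZMod (2^(e i1)))).toAddMonoidHom with hg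
    set γ := shear i0 i1 (Ne.symm h01) g with hγ
    have hg1 : γ x1 = x1 + x2 := by
      rw [hγ, shear_apply, hx1, Pi.single_eq_same]
      congr 1
      have : g 1 = 1 := by
        simp only [hg, RingHom.toAddMonoidHom_eq_coe, AddMonoidHom.coe_coe, map_one]
      rw [this, hx2]
    have hg2 : γ x2 = x2 := by
      rw [hγ, shear_apply, hx2, Pi.single_eq_of_ne h01, map_zero, Pi.single_zero,
        add_zero]
    have hpt0 : p i0 = 0 := by
      rw [hpt, Pi.single_eq_of_ne h01]
    have hγp : γ p = p := by
      rw [hγ, shear_apply, hpt0, map_zero, Pi.single_zero, add_zero]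
    have hq2 : mul x2 x2 = 0 := by
      have h := haut γ x1 x2
      rw [← hp, hγp, hg1, hg2, hdistl, ← hp] at h
      exact (add_eq_left.mp h.symm)
    -- the shear δ adding coordinate 1 into coordinate 0
    set f := liftHom (e i1) (e i0) h10e with hf
    set δ := shear i1 i0 h01 f with hδ
    have hd1 : δ x1 = x1 := by
      rw [hδ, shear_apply, hx1, Pi.single_eq_of_ne (Ne.symm h01), map_zero, Pi.single_zero,
        add_zero]
    have hf1 : f (x2 i1) = ((2^(e i0 - e i1) : ℕ) : ZMod (2^(e i0))) := by
      rw [hx2, Pi.single_eq_same, hf,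
        show (1 : ZMod (2^(e i1))) = ((1:ℕ) : ZMod (2^(e i1))) by norm_num,
        liftHom_natCast]
      norm_num
    have hd2 : δ x2 = x2 + Pi.single i0 ((2^(e i0 - e i1) : ℕ) : ZMod (2^(e i0))) := by
      rw [hδ, shear_apply, hf1]
    have hδp : δ p = p + Pi.single i0 ((2^(e i0 - 1) : ℕ) : ZMod (2^(e i0))) := by
      rw [hδ, shear_apply]
      congr 2
      rw [hpt, Pi.single_eq_same, hcast1, hf, liftHom_natCast,
        show (2:ℕ)^(e i1 - 1) * 2^(e i0 - e i1) = 2^(e i0 - 1) by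
          rw [← pow_add]; congr 1; have := he i1; omega]
    -- multiplication by x1 as an additive hom
    set L : (∀ k, ZMod (2^(e k))) →+ (∀ k, ZMod (2^(e k))) :=
      AddMonoidHom.mk' (mul x1) (fun b c => hdistr x1 b c) with hL
    have hkey : Pi.single i0 ((2^(e i0 - 1) : ℕ) : ZMod (2^(e i0)))
        = (2^(e i0 - e i1) : ℕ) • mul x1 x1 := by
      have h := haut δ x1 x2
      rw [← hp, hδp, hd1, hd2] at h
      have hsingle : Pi.single i0 ((2^(e i0 - e i1) : ℕ) : ZMod (2^(e i0)))
          = (2^(e i0 - e i1) : ℕ) • x1 := by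
        rw [hx1, ← Pi.single_smul]
        congr 1
        rw [nsmul_eq_mul, mul_one]
      rw [hsingle] at h
      have hxs : mul x1 ((2^(e i0 - e i1) : ℕ) • x1) = (2^(e i0 - e i1) : ℕ) • mul x1 x1 := by
        have := map_nsmul L (2^(e i0 - e i1)) x1
        simpa [hL] using this
      rw [hdistr, hxs, ← hp] at h
      exact add_left_cancel h
    have hq1tor : mul x1 x1 + mul x1 x1 = 0 := htwo x1 x1
    by_cases hee : e i1 = e i0
    · -- equal exponents : x1² = t1, derive contradiction via γ
      have hd0 : e i0 - e i1 = 0 := by omega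
      rw [hd0] at hkey
      simp only [pow_zero, one_smul] at hkey
      -- γ applied to x1·x1
      have h := haut γ x1 x1
      rw [hg1] at h
      have hrhs : mul (x1 + x2) (x1 + x2) = mul x1 x1 := by
        rw [hdistl, hdistr, hdistr, hcomm x2 x1, ← hp]
        rw [show mul x1 x1 + p + (p + mul x2 x2) = mul x1 x1 + (p + p) + mul x2 x2 by abel,
          hp2, hq2, add_zero, add_zero]
      rw [hrhs, hγ, shear_apply] at h
      -- h : mul x1 x1 + Pi.single i1 (g ((mul x1 x1) i0)) = mul x1 x1
      have hq1i0 : (mul x1 x1) i0 = ((2^(e i0 - 1) : ℕ) : ZMod (2^(e i0))) := by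
        rw [← hkey, Pi.single_eq_same]
      have hz : Pi.single i1 (g ((mul x1 x1) i0)) = (0 : ∀ j, ZMod (2^(e j))) :=
        add_eq_left.mp h
      have hz1 : g ((mul x1 x1) i0) = 0 := by
        have := congrFun hz i1
        simpa [Pi.single_eq_same] using this
      rw [hq1i0, hg] at hz1
      simp only [RingHom.toAddMonoidHom_eq_coe, AddMonoidHom.coe_coe, map_natCast] at hz1
      rw [show e i0 - 1 = e i1 - 1 by omega] at hz1
      exact aux_pow_ne (e i1) (he i1) hz1
    · -- strict inequality : the right side of hkey vanishes
      have hd1' : 1 ≤ e i0 - e i1 := by omega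
      have hz : (2^(e i0 - e i1) : ℕ) • mul x1 x1 = 0 := by
        rw [show (2:ℕ)^(e i0 - e i1) = 2^(e i0 - e i1 - 1) * 2 by
          rw [← pow_succ]; congr 1; omega]
        rw [mul_smul]
        rw [show (2 : ℕ) • mul x1 x1 = mul x1 x1 + mul x1 x1 from two_nsmul _]
        rw [hq1tor, smul_zero]
      rw [hz] at hkey
      have := congrFun hkey i0
      rw [Pi.single_eq_same] at this
      exact aux_pow_ne (e i0) (he i0) (by simpa using this)
end

section
/- Let G = F × H be an abelian group with F free abelian of positive rank and H a finite abelian 2-group, equipped with a commutative ring structure (G, +, ·) such that every automorphism of (G, +) is a ring automorphism. Then h·h' = 0 for all h, h' ∈ H, i.e., H·H = 0. -/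
theorem stmt_14 (n : ℕ) (hn : 1 ≤ n)
    {H : Type*} [AddCommGroup H] [Fintype H]
    (h2grp : ∃ k : ℕ, Fintype.card H = 2 ^ k)
    (mul : ((Fin n → ℤ) × H) → ((Fin n → ℤ) × H) → ((Fin n → ℤ) × H))
    (hcomm : ∀ a b, mul a b = mul b a)
    (hassoc : ∀ a b c, mul (mul a b) c = mul a (mul b c))
    (hdistl : ∀ a b c, mul (a + b) c = mul a c + mul b c)
    (hdistr : ∀ a b c, mul a (b + c) = mul a b + mul a c)
    (haut : ∀ (β : AddAut ((Fin n → ℤ) × H)) (a b),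
      β (mul a b) = mul (β a) (β b)) :
    ∀ h h' : H, mul (0, h) (0, h') = 0 := by
  intro h h'
  have mzero : ∀ a, mul a 0 = 0 := by
    intro a
    have h1 : mul a 0 = mul a 0 + mul a 0 := by simpa using hdistr a 0 0
    exact (left_eq_add.mp h1)
  have nsmul_mul : ∀ (a b : (Fin n → ℤ) × H) (m : ℕ),
      mul a (m • b) = m • mul a b := by
    intro a b m
    induction m with
    | zero => simpa using mzero a
    | succ k ih => simp [succ_nsmul, hdistr, ih]
  set i0 : Fin n := ⟨0, hn⟩ with hi0
  set u : (Fin n → ℤ) × H := (Pi.single i0 1, (0:H)) with hu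
  set N := Fintype.card H with hNdef
  have hNpos : 0 < N := Fintype.card_pos
  have hHN : ∀ k : H, N • k = 0 := fun k => card_nsmul_eq_zero
  -- torsion of t := mul u (0, h)
  set t := mul u ((0 : Fin n → ℤ), h) with ht
  have hNt : N • t = 0 := by
    have : mul u (N • ((0 : Fin n → ℤ), h)) = N • t := nsmul_mul u _ N
    rw [← this]
    have : N • ((0 : Fin n → ℤ), h) = 0 := by
      ext
      · simp
      · simpa using hHN h
    rw [this, mzero]
  have ht1 : t.1 = 0 := by
    funext i
    have h1 : (N : ℤ) * t.1 i = 0 := by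
      have := congrArg (fun p => p.1 i) hNt
      simpa [nsmul_eq_mul] using this
    have hN0 : (N : ℤ) ≠ 0 := by exact_mod_cast hNpos.ne'
    exact (mul_eq_zero.mp h1).resolve_left hN0
  -- the automorphism
  let β : ((Fin n → ℤ) × H) ≃+ ((Fin n → ℤ) × H) :=
    { toFun := fun p => (p.1, p.2 + (p.1 i0) • h'),
      invFun := fun p => (p.1, p.2 - (p.1 i0) • h'),
      left_inv := fun p => by simp,
      right_inv := fun p => by simp,
      map_add' := fun p q => by
        ext
        · simp
        · simp [add_smul]; abel }
  have hβt : β t = t := by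
    show (t.1, t.2 + (t.1 i0) • h') = t
    rw [ht1]
    simp only [Pi.zero_apply, zero_smul, add_zero]
    exact Prod.ext_iff.mpr ⟨ht1.symm, rfl⟩
  have hβu : β u = u + ((0 : Fin n → ℤ), h') := by
    show (u.1, u.2 + (u.1 i0) • h') = u + ((0 : Fin n → ℤ), h')
    ext
    · simp [hu]
    · simp [hu]
  have hβh : β ((0 : Fin n → ℤ), h) = ((0 : Fin n → ℤ), h) := by
    show ((0:Fin n → ℤ), h + ((0:Fin n → ℤ) i0) • h') = _
    simp
  have key := haut β u ((0 : Fin n → ℤ), h)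
  rw [hβt, hβu, hβh, hdistl] at key
  have h0 : mul ((0 : Fin n → ℤ), h') ((0 : Fin n → ℤ), h) = 0 := by
    have := key
    -- t = t + mul (0,h') (0,h)
    have h2 : t = t + mul ((0 : Fin n → ℤ), h') ((0 : Fin n → ℤ), h) := by
      simpa [ht] using this
    exact (left_eq_add.mp h2)
  rw [hcomm]
  exact h0
end

section
/- Let G = F × H with F free abelian of rank n > 2 and H a finite abelian 2-group, equipped with a commutative ring structure such that every automorphism of (G, +) is a ring automorphism. Then z·z' = 0 for all z, z' ∈ F. -/
private def mulHom {G : Type*} [AddCommGroup G] (mul : G → G → G)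
    (hl : ∀ a b c, mul (a+b) c = mul a c + mul b c)
    (hr : ∀ a b c, mul a (b+c) = mul a b + mul a c) : G →+ G →+ G :=
  AddMonoidHom.mk' (fun a => AddMonoidHom.mk' (mul a) (fun b c => hr a b c))
    (fun a b => AddMonoidHom.ext fun c => hl a b c)

private def gammaAut (n : ℕ) (H : Type*) [AddCommGroup H] (i j : Fin n) (hij : j ≠ i) :
    ((Fin n → ℤ) × H) ≃+ ((Fin n → ℤ) × H) where
  toFun p := (p.1 + p.1 i • Pi.single j 1, p.2)
  invFun p := (p.1 - p.1 i • Pi.single j 1, p.2)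
  left_inv p := by
    refine Prod.ext ?_ rfl
    funext k
    simp [Pi.single_apply, hij]
  right_inv p := by
    refine Prod.ext ?_ rfl
    funext k
    simp [Pi.single_apply, hij]
  map_add' p q := by
    refine Prod.ext ?_ rfl
    funext k
    simp [Pi.single_apply]
    split_ifs <;> ring

private lemma gammaAut_apply (n : ℕ) (H : Type*) [AddCommGroup H] (i j : Fin n)
    (hij : j ≠ i) (p : (Fin n → ℤ) × H) :
    gammaAut n H i j hij p = (p.1 + p.1 i • Pi.single j 1, p.2) := rfl

theorem stmt_15 (n : ℕ) (hn : 2 < n)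
    {H : Type*} [AddCommGroup H] [Fintype H]
    (h2grp : ∃ k : ℕ, Fintype.card H = 2 ^ k)
    (mul : ((Fin n → ℤ) × H) → ((Fin n → ℤ) × H) → ((Fin n → ℤ) × H))
    (hcomm : ∀ a b, mul a b = mul b a)
    (hassoc : ∀ a b c, mul (mul a b) c = mul a (mul b c))
    (hdistl : ∀ a b c, mul (a + b) c = mul a c + mul b c)
    (hdistr : ∀ a b c, mul a (b + c) = mul a b + mul a c)
    (haut : ∀ (β : AddAut ((Fin n → ℤ) × H)) (a b),
      β (mul a b) = mul (β a) (β b)) :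
    ∀ z z' : Fin n → ℤ, mul (z, 0) (z', 0) = 0 := by
  have hB : ∀ a b, mulHom mul hdistl hdistr a b = mul a b := fun a b => rfl
  -- every product is 2-torsion
  have h2 : ∀ a b, mul a b + mul a b = 0 := by
    intro a b
    have hneg := haut (AddEquiv.neg ((Fin n → ℤ) × H)) a b
    simp only [AddEquiv.neg_apply] at hneg
    have h : -(mul a b) = mul a b := by
      rw [hneg, ← hB a b, ← hB (-a) (-b)]
      simp only [map_neg, AddMonoidHom.neg_apply, neg_neg]
    exact add_eq_zero_iff_eq_neg.mpr h.symm
  -- first component of any product vanishes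
  have hfst : ∀ a b, (mul a b).1 = 0 := by
    intro a b
    funext k
    have h3 := congrFun (congrArg Prod.fst (h2 a b)) k
    simp only [Prod.fst_add, Pi.add_apply, Prod.fst_zero, Pi.zero_apply] at h3
    simpa using h3
  -- basis elements
  set e : Fin n → (Fin n → ℤ) × H := fun i => (Pi.single i 1, 0) with he
  -- gammaAut fixes elements with zero first component
  have hgfix : ∀ (i j : Fin n) (hij : j ≠ i) (p : (Fin n → ℤ) × H), p.1 = 0 →
      gammaAut n H i j hij p = p := by
    intro i j hij p hp
    rw [gammaAut_apply, hp]
    simp only [Pi.zero_apply, zero_smul, add_zero, zero_add]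
    exact Prod.ext hp.symm rfl
  have hge : ∀ (i j : Fin n) (hij : j ≠ i),
      gammaAut n H i j hij (e i) = e i + e j := by
    intro i j hij
    rw [gammaAut_apply]
    simp [he, Prod.ext_iff]
  have hgne : ∀ (i j k : Fin n) (hij : j ≠ i), k ≠ i →
      gammaAut n H i j hij (e k) = e k := by
    intro i j k hij hki
    rw [gammaAut_apply]
    simp [he, Pi.single_apply, hki]
  -- applying haut with gammaAut
  have key : ∀ (i j : Fin n) (hij : j ≠ i) (b : (Fin n → ℤ) × H),
      gammaAut n H i j hij b = b →
      mul (e i) b = mul (e i) b + mul (e j) b := by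
    intro i j hij b hb
    have h := haut (gammaAut n H i j hij) (e i) b
    rw [hgfix i j hij _ (hfst _ _), hge i j hij, hb, hdistl] at h
    exact h
  -- diagonal products vanish
  have hdiag : ∀ j, mul (e j) (e j) = 0 := by
    intro j
    obtain ⟨i, hij⟩ : ∃ i : Fin n, j ≠ i := by
      rcases Fintype.exists_ne_of_one_lt_card (by simp; omega) j with ⟨i, hi⟩
      exact ⟨i, hi.symm⟩
    have h := haut (gammaAut n H i j hij) (e i) (e i)
    rw [hgfix i j hij _ (hfst _ _), hge i j hij, hdistl, hdistr, hdistr] at h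
    -- h : m_ii = (m_ii + m_ij) + (m_ji + m_jj)
    have hc : mul (e i) (e j) + mul (e j) (e i) = 0 := by
      rw [hcomm (e i) (e j)]; exact h2 _ _
    have : mul (e i) (e i) = mul (e i) (e i) + mul (e j) (e j) := by
      calc mul (e i) (e i) = mul (e i) (e i) + mul (e i) (e j)
              + (mul (e j) (e i) + mul (e j) (e j)) := h
        _ = mul (e i) (e i) + mul (e j) (e j)
              + (mul (e i) (e j) + mul (e j) (e i)) := by abel
        _ = mul (e i) (e i) + mul (e j) (e j) := by rw [hc, add_zero]
    exact (left_eq_add.mp this)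
  -- off-diagonal products vanish
  have hoff : ∀ j k : Fin n, mul (e j) (e k) = 0 := by
    intro j k
    rcases eq_or_ne j k with rfl | hjk
    · exact hdiag j
    obtain ⟨i, hi⟩ : ∃ i : Fin n, i ∉ ({j, k} : Finset (Fin n)) := by
      by_contra hcon
      push_neg at hcon
      have hsub : (Finset.univ : Finset (Fin n)) ⊆ {j, k} := fun x _ => hcon x
      have hle := Finset.card_le_card hsub
      have hc2 : ({j, k} : Finset (Fin n)).card ≤ 2 := Finset.card_le_two
      simp [Finset.card_univ] at hle
      omega
    simp only [Finset.mem_insert, Finset.mem_singleton, not_or] at hi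
    obtain ⟨hij, hik⟩ := hi
    have h := key i j (Ne.symm hij) (e k) (hgne i j k (Ne.symm hij) (Ne.symm hik))
    exact (left_eq_add.mp h)
  have hsml : ∀ (m : ℤ) a b, mul (m • a) b = m • mul a b := fun m a b =>
    map_zsmul ((mulHom mul hdistl hdistr).flip b) m a
  -- bilinear expansion
  intro z z'
  have hz : ∀ w : Fin n → ℤ, ((w, 0) : (Fin n → ℤ) × H) = ∑ i, w i • e i := by
    intro w
    refine Prod.ext ?_ ?_
    · rw [Prod.fst_sum]
      simp only [he, Prod.smul_fst]
      funext k
      simp [Pi.single_apply, Finset.sum_ite_eq', mul_comm]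
    · rw [Prod.snd_sum]
      simp [he]
  rw [← hB, hz z, hz z', map_sum]
  refine Finset.sum_eq_zero fun x _ => ?_
  rw [map_sum, AddMonoidHom.finset_sum_apply]
  refine Finset.sum_eq_zero fun i _ => ?_
  have hsmr : ∀ (m : ℤ) a b, mul a (m • b) = m • mul a b := fun m a b =>
    map_zsmul (mulHom mul hdistl hdistr a) m b
  rw [hB, hsml, hsmr, hoff i x, smul_zero, smul_zero]
end

section
/- Let H = ⟨x₁⟩ be a cyclic group of order 4 with involution t₁ = 2x₁, equipped with the commutative ring structure where x₁·x₁ = t₁ (extended biadditively, all other products determined). Then the group (H, ∘) with g ∘ h = g + h + g·h is elementary abelian of order 4; in particular (H, ∘) is not isomorphic to (H, +). -/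
-- `g + g + 2g² = 2g(g + 1)` vanishes because `g(g + 1)` is even.
theorem ZMod.add_self_add_two_mul_mul_self_eq_zero (g : ZMod 4) : g + g + 2 * g * g = 0 := by
  revert g; decide

theorem add_self_eq_zero_of_injective_of_map_add {G X : Type*} [AddZeroClass G]
    {op : X → X → X} {c : X} (hop : ∀ x, op x x = c) {φ : G → X} (hφ : Function.Injective φ)
    (hadd : ∀ a b, φ (a + b) = op (φ a) (φ b)) (a : G) : a + a = 0 :=
  hφ <| calc
    φ (a + a) = c := by rw [hadd, hop]
    _ = φ (0 + 0) := by rw [hadd, hop]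
    _ = φ 0 := by rw [add_zero]

theorem stmt_19 (mul : ZMod 4 → ZMod 4 → ZMod 4)
    (hmul : ∀ a b : ZMod 4, mul a b = 2 * a * b)
    (circ : ZMod 4 → ZMod 4 → ZMod 4)
    (hcirc : ∀ g h : ZMod 4, circ g h = g + h + mul g h) :
    (∀ g : ZMod 4, circ g g = 0) ∧
    ¬ ∃ φ : ZMod 4 ≃ ZMod 4, ∀ a b : ZMod 4, φ (a + b) = circ (φ a) (φ b) := by
  have circ_self : ∀ g, circ g g = 0 := fun g => by
    rw [hcirc, hmul, ZMod.add_self_add_two_mul_mul_self_eq_zero]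
  refine ⟨circ_self, ?_⟩
  rintro ⟨φ, hφ⟩
  have one_add_one : (1 : ZMod 4) + 1 = 0 :=
    add_self_eq_zero_of_injective_of_map_add circ_self φ.injective hφ 1
  exact absurd one_add_one (by decide)
end
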